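/- arXiv:0808.2324 — 3 statements merged into one kernel-verified Lean document; each statement's English description precedes it below -/
import Mathlib

section
/- Let Q > 0 and R > 0 be two positive solutions on [0,∞) of −u'' − (3/r)u' − u + U_u(r) u = 0, u'(0) = 0, with U_u(r) = ∫_0^r K(r,s)u(s)² ds and K(r,s) = 2π²s(1−s²/r²) ≥ 0. If Q(0) > R(0), then Q(r) > R(r) for all r ≥ 0. -/
/-!
With the weighted Wronskian `W(r) = r³ (Q'R − QR')(r)`, the two equations give
`W' = r³ QR (U_Q − U_R)`. Let `c > 0` be the first point where `Q = R`. On `(0, c)` we have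
`Q > R > 0`, so `U_Q > U_R` because `K ≥ 0`; hence `W` increases from `W(0⁺) = 0` and `W(c) > 0`.
But at a first crossing `Q' ≤ R'`, so `W(c) = c³ R(c) (Q' − R')(c) ≤ 0`.
-/

open MeasureTheory Real

noncomputable section

/-- The kernel `K(r,s) = 2π² s (1 - s²/r²)`. -/
def newtonK (r s : ℝ) : ℝ := 2 * π ^ 2 * s * (1 - s ^ 2 / r ^ 2)

/-- `U_u(r) = ∫₀ʳ K(r,s) u(s)² ds`. -/
def Upot (u : ℝ → ℝ) (r : ℝ) : ℝ := ∫ s in Set.Ioc (0:ℝ) r, newtonK r s * u s ^ 2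

open Filter Set Topology

theorem ContDiffOn.tendsto_deriv_nhdsGT {f : ℝ → ℝ} {a : ℝ} (hf : ContDiffOn ℝ 1 f (Ici a)) :
    Tendsto (deriv f) (𝓝[>] a) (𝓝 (derivWithin f (Ici a) a)) := by
  have hcont := hf.continuousOn_derivWithin (uniqueDiffOn_Ici a) le_rfl a self_mem_Ici
  refine (hcont.tendsto.mono_left (nhdsWithin_mono a Ioi_subset_Ici_self)).congr' ?_
  filter_upwards [self_mem_nhdsWithin] with x hx
  exact derivWithin_of_mem_nhds (Ici_mem_nhds hx)

theorem HasDerivAt.nonpos_of_le_left {f : ℝ → ℝ} {f' a c : ℝ} (hf : HasDerivAt f f' c)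
    (hac : a < c) (hle : ∀ x ∈ Ioo a c, f c ≤ f x) : f' ≤ 0 := by
  refine le_of_tendsto (hasDerivAt_iff_tendsto_slope_left_right.1 hf).1 ?_
  filter_upwards [Ioo_mem_nhdsLT hac] with x hx
  rw [slope_def_field]
  exact div_nonpos_of_nonneg_of_nonpos (sub_nonneg.2 (hle x hx)) (sub_nonpos.2 hx.2.le)

theorem exists_first_zero_of_continuousOn {f : ℝ → ℝ} {a b : ℝ} (hab : a ≤ b)
    (hf : ContinuousOn f (Icc a b)) (ha : 0 < f a) (hb : f b ≤ 0) :
    ∃ c ∈ Ioc a b, f c = 0 ∧ ∀ x ∈ Ico a c, 0 < f x := by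
  set S := Icc a b ∩ f ⁻¹' Iic 0
  have hS : IsClosed S := hf.preimage_isClosed_of_isClosed isClosed_Icc isClosed_Iic
  have hbdd : BddBelow S := ⟨a, fun x hx => hx.1.1⟩
  have hcS : sInf S ∈ S := hS.csInf_mem ⟨b, ⟨hab, le_rfl⟩, hb⟩ hbdd
  have hbefore : ∀ x ∈ Ico a (sInf S), 0 < f x := fun x hx => by
    by_contra! hfx
    exact (csInf_le hbdd ⟨⟨hx.1, hx.2.le.trans hcS.1.2⟩, hfx⟩).not_gt hx.2
  have hac : a < sInf S := hcS.1.1.lt_of_ne fun h => (h ▸ hcS.2).not_gt ha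
  obtain ⟨d, hd, hfd⟩ := intermediate_value_Icc' hcS.1.1 (hf.mono (Icc_subset_Icc_right hcS.1.2))
    ⟨hcS.2, ha.le⟩
  have hdc : d = sInf S :=
    hd.2.antisymm (csInf_le hbdd ⟨⟨hd.1, hd.2.trans hcS.1.2⟩, hfd.le⟩)
  exact ⟨sInf S, ⟨hac, hcS.1.2⟩, hdc ▸ hfd, hbefore⟩

theorem lt_of_tendsto_nhdsGT_of_deriv_pos {g g' : ℝ → ℝ} {a b l : ℝ} (hab : a < b)
    (hg : Tendsto g (𝓝[>] a) (𝓝 l)) (hderiv : ∀ x ∈ Ioc a b, HasDerivAt g (g' x) x)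
    (hpos : ∀ x ∈ Ioo a b, 0 < g' x) : l < g b := by
  have hmono : StrictMonoOn g (Ioc a b) := by
    refine strictMonoOn_of_deriv_pos (convex_Ioc a b)
      (fun x hx => (hderiv x hx).continuousAt.continuousWithinAt) fun x hx => ?_
    rw [interior_Ioc] at hx
    rw [(hderiv x (Ioo_subset_Ioc_self hx)).deriv]
    exact hpos x hx
  obtain ⟨m, ham, hmb⟩ := exists_between hab
  have hlm : l ≤ g m := by
    refine le_of_tendsto hg ?_
    filter_upwards [Ioo_mem_nhdsGT ham] with x hx
    exact (hmono ⟨hx.1, hx.2.le.trans hmb.le⟩ ⟨ham, hmb.le⟩ hx.2).le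
  exact hlm.trans_lt (hmono ⟨ham, hmb.le⟩ ⟨hab, le_rfl⟩ hmb)

theorem newtonK_pos {r s : ℝ} (hs : 0 < s) (hsr : s < r) : 0 < newtonK r s := by
  have hr : 0 < r := hs.trans hsr
  have hsr2 : s ^ 2 / r ^ 2 < 1 :=
    (div_lt_one (by positivity)).2 (pow_lt_pow_left₀ hsr hs.le two_ne_zero)
  exact mul_pos (by positivity) (sub_pos.2 hsr2)

theorem Upot_lt_Upot {Q R : ℝ → ℝ} {x : ℝ} (hx : 0 < x) (hQ : ContinuousOn Q (Icc 0 x))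
    (hR : ContinuousOn R (Icc 0 x)) (hR0 : ∀ s ∈ Ioo 0 x, 0 ≤ R s)
    (hlt : ∀ s ∈ Ioo 0 x, R s < Q s) : Upot R x < Upot Q x := by
  have hK : Continuous (newtonK x) := by unfold newtonK; fun_prop
  have key : ∀ s ∈ Ioo 0 x, newtonK x s * R s ^ 2 < newtonK x s * Q s ^ 2 := fun s hs =>
    mul_lt_mul_of_pos_left (pow_lt_pow_left₀ (hlt s hs) (hR0 s hs) two_ne_zero)
      (newtonK_pos hs.1 hs.2)
  simp only [Upot, ← intervalIntegral.integral_of_le hx.le]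
  refine intervalIntegral.integral_lt_integral_of_continuousOn_of_le_of_exists_lt hx
    (hK.continuousOn.mul (hR.pow 2)) (hK.continuousOn.mul (hQ.pow 2)) (fun s hs => ?_)
    ⟨x / 2, ⟨by linarith, by linarith⟩, key _ ⟨by linarith, by linarith⟩⟩
  rcases hs.2.lt_or_eq with h | rfl
  · exact (key s ⟨hs.1, h⟩).le
  · simp [newtonK, hs.1.ne']

def radialWronskian (Q R : ℝ → ℝ) (r : ℝ) : ℝ := r ^ 3 * (deriv Q r * R r - Q r * deriv R r)

theorem ContDiffAt.differentiableAt_deriv {f : ℝ → ℝ} {x : ℝ} (hf : ContDiffAt ℝ 2 f x) :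
    DifferentiableAt ℝ (deriv f) x :=
  (hf.derivWithin (m := 1) (by norm_num)).differentiableAt one_ne_zero

theorem hasDerivAt_radialWronskian {Q R : ℝ → ℝ} {x p q : ℝ} (hx : x ≠ 0)
    (hQ : ContDiffAt ℝ 2 Q x) (hR : ContDiffAt ℝ 2 R x)
    (hQeq : -(deriv (deriv Q) x) - (3 / x) * deriv Q x - Q x + p * Q x = 0)
    (hReq : -(deriv (deriv R) x) - (3 / x) * deriv R x - R x + q * R x = 0) :
    HasDerivAt (radialWronskian Q R) (x ^ 3 * ((p - q) * Q x * R x)) x := by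
  have h := (hasDerivAt_pow 3 x).mul
    ((hQ.differentiableAt_deriv.hasDerivAt.mul (hR.differentiableAt two_ne_zero).hasDerivAt).sub
      ((hQ.differentiableAt two_ne_zero).hasDerivAt.mul hR.differentiableAt_deriv.hasDerivAt))
  refine h.congr_deriv ?_
  have hQ'' : deriv (deriv Q) x = (p - 1) * Q x - 3 / x * deriv Q x := by linear_combination -hQeq
  have hR'' : deriv (deriv R) x = (q - 1) * R x - 3 / x * deriv R x := by linear_combination -hReq
  simp only [Pi.mul_apply, Pi.sub_apply, hQ'', hR'']
  field_simp
  ring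

theorem tendsto_radialWronskian_nhdsGT_zero {Q R : ℝ → ℝ} (hQ : ContDiffOn ℝ 1 Q (Ici 0))
    (hR : ContDiffOn ℝ 1 R (Ici 0)) : Tendsto (radialWronskian Q R) (𝓝[>] 0) (𝓝 0) := by
  have hsub : 𝓝[>] (0:ℝ) ≤ 𝓝[Ici 0] 0 := nhdsWithin_mono 0 Ioi_subset_Ici_self
  have tQ := (hQ.continuousOn 0 self_mem_Ici).tendsto.mono_left hsub
  have tR := (hR.continuousOn 0 self_mem_Ici).tendsto.mono_left hsub
  have tpow : Tendsto (fun r : ℝ => r ^ 3) (𝓝[>] 0) (𝓝 (0 ^ 3)) :=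
    ((continuous_pow 3).tendsto 0).mono_left nhdsWithin_le_nhds
  have h := tpow.mul ((hQ.tendsto_deriv_nhdsGT.mul tR).sub (tQ.mul hR.tendsto_deriv_nhdsGT))
  rwa [zero_pow three_ne_zero, zero_mul] at h

theorem solutions_never_intersect_general
    (Q R : ℝ → ℝ)
    (hQC2 : ContDiffOn ℝ 2 Q (Set.Ici 0)) (hRC2 : ContDiffOn ℝ 2 R (Set.Ici 0))
    (hRpos : ∀ r : ℝ, 0 ≤ r → 0 < R r)
    (hQeq : ∀ r : ℝ, 0 < r →
      -(deriv (deriv Q) r) - (3 / r) * deriv Q r - Q r + Upot Q r * Q r = 0)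
    (hReq : ∀ r : ℝ, 0 < r →
      -(deriv (deriv R) r) - (3 / r) * deriv R r - R r + Upot R r * R r = 0)
    (h0 : Q 0 > R 0) :
    ∀ r : ℝ, 0 ≤ r → Q r > R r := by
  intro r hr
  by_contra! hle
  obtain ⟨c, ⟨hc, -⟩, hQRc, hbefore⟩ := exists_first_zero_of_continuousOn (f := Q - R) hr
    ((hQC2.continuousOn.sub hRC2.continuousOn).mono Icc_subset_Ici_self) (sub_pos.2 h0)
    (sub_nonpos.2 hle)
  have hRQ : ∀ x ∈ Ico 0 c, R x < Q x := fun x hx => sub_pos.1 (hbefore x hx)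
  have hW' : ∀ x ∈ Ioc 0 c, HasDerivAt (radialWronskian Q R)
      (x ^ 3 * ((Upot Q x - Upot R x) * Q x * R x)) x := fun x hx =>
    hasDerivAt_radialWronskian hx.1.ne' (hQC2.contDiffAt (Ici_mem_nhds hx.1))
      (hRC2.contDiffAt (Ici_mem_nhds hx.1)) (hQeq x hx.1) (hReq x hx.1)
  have hW'pos : ∀ x ∈ Ioo 0 c, 0 < x ^ 3 * ((Upot Q x - Upot R x) * Q x * R x) := by
    intro x hx
    have hU := Upot_lt_Upot hx.1 (hQC2.continuousOn.mono Icc_subset_Ici_self)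
      (hRC2.continuousOn.mono Icc_subset_Ici_self) (fun s hs => (hRpos s hs.1.le).le)
      fun s hs => hRQ s ⟨hs.1.le, hs.2.trans hx.2⟩
    have hR := hRpos x hx.1.le
    exact mul_pos (pow_pos hx.1 3)
      (mul_pos (mul_pos (sub_pos.2 hU) (hR.trans (hRQ x ⟨hx.1.le, hx.2⟩))) hR)
  have hWc : 0 < radialWronskian Q R c := lt_of_tendsto_nhdsGT_of_deriv_pos hc
    (tendsto_radialWronskian_nhdsGT_zero (hQC2.of_le one_le_two) (hRC2.of_le one_le_two))
    hW' hW'pos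
  have hcross : deriv Q c - deriv R c ≤ 0 := by
    have hdiff {f : ℝ → ℝ} (hf : ContDiffOn ℝ 2 f (Ici 0)) : DifferentiableAt ℝ f c :=
      (hf.contDiffAt (Ici_mem_nhds hc)).differentiableAt two_ne_zero
    exact ((hdiff hQC2).hasDerivAt.sub (hdiff hRC2).hasDerivAt).nonpos_of_le_left hc
      fun x hx => hQRc ▸ (hbefore x (Ioo_subset_Ico_self hx)).le
  have hWc_nonpos : radialWronskian Q R c ≤ 0 := calc
    radialWronskian Q R c = c ^ 3 * R c * (deriv Q c - deriv R c) := by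
      simp only [radialWronskian, sub_eq_zero.1 hQRc]; ring
    _ ≤ 0 := mul_nonpos_of_nonneg_of_nonpos (by have := hRpos c hc.le; positivity) hcross
  exact hWc.not_ge hWc_nonpos

/-- Non-intersection property: two positive solutions of
`-u'' - (3/r)u' - u + U_u(r) u = 0`, `u'(0) = 0`, with `Q(0) > R(0)`
satisfy `Q(r) > R(r)` for all `r ≥ 0`. -/
theorem solutions_never_intersect
    (Q R : ℝ → ℝ)
    (hQC2 : ContDiffOn ℝ 2 Q (Set.Ici 0)) (hRC2 : ContDiffOn ℝ 2 R (Set.Ici 0))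
    (hQpos : ∀ r : ℝ, 0 ≤ r → 0 < Q r) (hRpos : ∀ r : ℝ, 0 ≤ r → 0 < R r)
    (hQ0 : deriv Q 0 = 0) (hR0 : deriv R 0 = 0)
    (hQeq : ∀ r : ℝ, 0 < r →
      -(deriv (deriv Q) r) - (3 / r) * deriv Q r - Q r + Upot Q r * Q r = 0)
    (hReq : ∀ r : ℝ, 0 < r →
      -(deriv (deriv R) r) - (3 / r) * deriv R r - R r + Upot R r * R r = 0)
    (h0 : Q 0 > R 0) :
    ∀ r : ℝ, 0 ≤ r → Q r > R r :=
  solutions_never_intersect_general Q R hQC2 hRC2 hRpos hQeq hReq h0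
end
end

section
/- Let H_Q = −Δ + U_Q and H_R = −Δ + U_R be Schrödinger operators on L²(ℝ⁴) with continuous potentials satisfying U_Q(x) > U_R(x) for all x ≠ 0. Suppose Q > 0 and R > 0 are normalized eigenfunctions with H_Q Q = Q and H_R R = R, and both operators satisfy ⟨φ, H φ⟩ ≥ ‖φ‖²_{L²} for all φ ∈ H¹(ℝ⁴). Then a contradiction arises: ‖Q‖²_{L²} ≤ ⟨Q, H_R Q⟩ = ‖Q‖²_{L²} − ⟨Q, (U_Q − U_R)Q⟩ < ‖Q‖²_{L²}. -/
/-!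
Testing the form bound of `H_R` with `Q` gives `1 ≤ ∫ ‖∇Q‖² + ∫ U_R Q²`, while pairing the
eigenvalue equation of `Q` with `Q` gives `∫ ‖∇Q‖² = 1 - ∫ U_Q Q²`; together,
`∫ (U_Q - U_R) Q² ≤ 0`, although the integrand is positive off the null set `{0}`.
The integration by parts `-∫ Q ΔQ = ∫ ‖∇Q‖²` on all of `ℝ⁴` is done against the cutoffs
`ψ (x / (n + 1))`: the extra term `∫ Q ∇ψₙ · ∇Q` is `O(1/n)` because `Q, ∇Q ∈ L²`.
-/

open MeasureTheory

noncomputable section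

abbrev E4 := EuclideanSpace ℝ (Fin 4)

/-- The Laplacian of a function `f : ℝ⁴ → ℝ`. -/
def lapR (f : E4 → ℝ) (x : E4) : ℝ :=
  ∑ i : Fin 4, fderiv ℝ (fun y => fderiv ℝ f y (EuclideanSpace.single i 1)) x
      (EuclideanSpace.single i 1)

open Filter Topology
open scoped RealInnerProductSpace

theorem tendsto_integral_of_norm_le_mul {α : Type*} [MeasurableSpace α] {ν : Measure α}
    {F : ℕ → α → ℝ} {g : α → ℝ} {c : ℕ → ℝ} (hg : Integrable g ν)
    (hc : Tendsto c atTop (𝓝 0)) (hF : ∀ n x, ‖F n x‖ ≤ c n * g x) :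
    Tendsto (fun n => ∫ x, F n x ∂ν) atTop (𝓝 0) := by
  refine squeeze_zero_norm (fun n => (norm_integral_le_of_norm_le (hg.const_mul (c n))
    (ae_of_all _ (hF n))).trans_eq (integral_const_mul _ _)) ?_
  simpa using hc.mul_const (∫ x, g x ∂ν)

theorem integral_pos_of_pos_off_singleton {α : Type*} [MeasurableSpace α] {ν : Measure α}
    [NullSingletonClass ν] [NeZero ν] {f : α → ℝ} (a : α) (hf : Integrable f ν)
    (hpos : ∀ x, x ≠ a → 0 < f x) : 0 < ∫ x, f x ∂ν := by
  have hae : ∀ᵐ x ∂ν, x ≠ a := measure_eq_zero_iff_ae_notMem.1 (measure_singleton a)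
  rw [integral_pos_iff_support_of_nonneg_ae (hae.mono fun x hx => (hpos x hx).le) hf,
    pos_iff_ne_zero]
  intro hsupp
  refine NeZero.ne ν (ae_eq_bot.1 (eventually_false_iff_eq_bot.1 ?_))
  filter_upwards [measure_eq_zero_iff_ae_notMem.1 hsupp, hae] with x hx hxa
  exact hx (hpos x hxa).ne'

namespace ContDiffBump

variable {E : Type*} [NormedAddCommGroup E] [NormedSpace ℝ E] [HasContDiffBump E]
  (ψ : ContDiffBump (0 : E))

def cutoff (n : ℕ) (x : E) : ℝ := ψ (((n : ℝ) + 1)⁻¹ • x)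

variable {ψ}

theorem contDiff_cutoff {k : ℕ∞} (n : ℕ) : ContDiff ℝ k (ψ.cutoff n) :=
  ψ.contDiff.comp (contDiff_const_smul _)

theorem continuous_cutoff (n : ℕ) : Continuous (ψ.cutoff n) :=
  (contDiff_cutoff (k := 0) n).continuous

theorem abs_cutoff_le_one (n : ℕ) (x : E) : |ψ.cutoff n x| ≤ 1 := by
  rw [cutoff, abs_of_nonneg ψ.nonneg]
  exact ψ.le_one

theorem tendsto_cutoff (x : E) : Tendsto (ψ.cutoff · x) atTop (𝓝 1) := by
  refine tendsto_const_nhds.congr' ?_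
  have hlim : Tendsto (fun n : ℕ => ((n : ℝ) + 1)⁻¹ * ‖x‖) atTop (𝓝 0) := by
    simpa using (tendsto_one_div_add_atTop_nhds_zero_nat (𝕜 := ℝ)).mul_const ‖x‖
  filter_upwards [hlim.eventually (ge_mem_nhds ψ.rIn_pos)] with n hn
  refine (ψ.one_of_mem_closedBall ?_).symm
  rwa [Metric.mem_closedBall, dist_zero_right, norm_smul, Real.norm_of_nonneg (by positivity)]

theorem fderiv_cutoff (n : ℕ) (x : E) :
    fderiv ℝ (ψ.cutoff n) x = ((n : ℝ) + 1)⁻¹ • fderiv ℝ ψ (((n : ℝ) + 1)⁻¹ • x) :=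
  fderiv_comp_smul _

theorem tendsto_integral_cutoff_mul [MeasurableSpace E] [BorelSpace E] {μ : Measure E}
    {f : E → ℝ} (hf : Integrable f μ) :
    Tendsto (fun n => ∫ x, ψ.cutoff n x * f x ∂μ) atTop (𝓝 (∫ x, f x ∂μ)) := by
  refine tendsto_integral_of_dominated_convergence (fun x => ‖f x‖)
    (fun n => (ψ.continuous_cutoff n).aestronglyMeasurable.mul hf.aestronglyMeasurable) hf.norm
    (fun n => ae_of_all _ fun x => ?_)
    (ae_of_all _ fun x => by simpa using (ψ.tendsto_cutoff x).mul_const (f x))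
  rw [norm_mul, Real.norm_eq_abs]
  exact mul_le_of_le_one_left (norm_nonneg _) (ψ.abs_cutoff_le_one n x)

variable [FiniteDimensional ℝ E]

theorem hasCompactSupport_cutoff (n : ℕ) : HasCompactSupport (ψ.cutoff n) :=
  ψ.hasCompactSupport.comp_smul (by positivity)

theorem exists_norm_fderiv_cutoff_le :
    ∃ M, ∀ n x, ‖fderiv ℝ (ψ.cutoff n) x‖ ≤ M * ((n : ℝ) + 1)⁻¹ := by
  obtain ⟨M, hM⟩ := ψ.hasCompactSupport.fderiv (𝕜 := ℝ) |>.exists_bound_of_continuous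
    (ψ.contDiff.continuous_fderiv one_ne_zero)
  refine ⟨M, fun n x => ?_⟩
  rw [fderiv_cutoff, norm_smul, Real.norm_of_nonneg (by positivity), mul_comm]
  gcongr
  exact hM _

end ContDiffBump

namespace OrthonormalBasis

variable {E : Type*} [NormedAddCommGroup E] [InnerProductSpace ℝ E] [CompleteSpace E]
  {ι : Type*} [Fintype ι] (b : OrthonormalBasis ι ℝ E)

open InnerProductSpace in
theorem sum_apply_mul_apply (ℓ m : StrongDual ℝ E) :
    ∑ i, ℓ (b i) * m (b i) = ⟪(toDual ℝ E).symm ℓ, (toDual ℝ E).symm m⟫ := by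
  rw [← b.sum_inner_mul_inner]
  congr! 2 with i
  · exact toDual_symm_apply.symm
  · rw [real_inner_comm, toDual_symm_apply]

theorem sum_apply_sq (ℓ : StrongDual ℝ E) : ∑ i, ℓ (b i) ^ 2 = ‖ℓ‖ ^ 2 := by
  simp_rw [sq, b.sum_apply_mul_apply, real_inner_self_eq_norm_mul_norm,
    LinearIsometryEquiv.norm_map]

theorem abs_sum_apply_mul_apply_le (ℓ m : StrongDual ℝ E) :
    |∑ i, ℓ (b i) * m (b i)| ≤ ‖ℓ‖ * ‖m‖ := by
  rw [b.sum_apply_mul_apply, ← LinearIsometryEquiv.norm_map (InnerProductSpace.toDual ℝ E).symm ℓ,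
    ← LinearIsometryEquiv.norm_map (InnerProductSpace.toDual ℝ E).symm m]
  exact abs_real_inner_le_norm _ _

end OrthonormalBasis

section IntegrationByParts

variable {E : Type*} [NormedAddCommGroup E] [NormedSpace ℝ E] [FiniteDimensional ℝ E]
  [MeasurableSpace E] [BorelSpace E] {μ : Measure E} [μ.IsAddHaarMeasure]
  {ι : Type*} [Fintype ι]

theorem integral_mul_sum_fderiv_fderiv_eq_neg {φ u : E → ℝ} (v : ι → E)
    (hφ : ContDiff ℝ 1 φ) (hφc : HasCompactSupport φ) (hu : ContDiff ℝ 2 u) :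
    ∫ x, φ x * ∑ i, fderiv ℝ (fun y => fderiv ℝ u y (v i)) x (v i) ∂μ
      = -∫ x, ∑ i, fderiv ℝ φ x (v i) * fderiv ℝ u x (v i) ∂μ := by
  have hDu : ∀ w, ContDiff ℝ 1 (fun y => fderiv ℝ u y w) := fun w =>
    (hu.fderiv_right (m := 1) le_rfl).clm_apply contDiff_const
  have hD2u : ∀ w, Continuous (fun x => fderiv ℝ (fun y => fderiv ℝ u y w) x w) := fun w =>
    ((hDu w).continuous_fderiv one_ne_zero).clm_apply continuous_const
  have hDφ : ∀ w, Continuous (fun y => fderiv ℝ φ y w) := fun w =>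
    (hφ.continuous_fderiv one_ne_zero).clm_apply continuous_const
  have hint : ∀ {f : E → ℝ}, Continuous f → Integrable (fun x => φ x * f x) μ := fun hf =>
    (hφ.continuous.mul hf).integrable_of_hasCompactSupport hφc.mul_right
  have hint_deriv : ∀ i, Integrable (fun x => fderiv ℝ φ x (v i) * fderiv ℝ u x (v i)) μ :=
    fun i => ((hDφ _).mul (hDu _).continuous).integrable_of_hasCompactSupport
      ((hφc.fderiv_apply (𝕜 := ℝ) (v i)).mul_right)
  simp_rw [Finset.mul_sum]
  rw [integral_finsetSum _ fun i _ => hint (hD2u _), integral_finsetSum _ fun i _ => hint_deriv i,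
    ← Finset.sum_neg_distrib]
  refine Finset.sum_congr rfl fun i _ => ?_
  exact integral_mul_fderiv_eq_neg_fderiv_mul_of_integrable (hint_deriv i) (hint (hD2u _))
    (hint (hDu _).continuous) (fun x _ => hφ.differentiable one_ne_zero x)
    (fun x _ => (hDu _).differentiable one_ne_zero x)

end IntegrationByParts

section Laplacian

variable {E : Type*} [NormedAddCommGroup E] [InnerProductSpace ℝ E] [FiniteDimensional ℝ E]
  [MeasurableSpace E] [BorelSpace E] {μ : Measure E} [μ.IsAddHaarMeasure]
  {ι : Type*} [Fintype ι]

theorem integral_norm_fderiv_sq_eq_neg_integral_mul_laplacian (b : OrthonormalBasis ι ℝ E)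
    {u : E → ℝ} (hu : ContDiff ℝ 2 u) (hu2 : MemLp u 2 μ) (hDu2 : MemLp (fderiv ℝ u) 2 μ)
    (hlap : Integrable
      (fun x => u x * ∑ i, fderiv ℝ (fun y => fderiv ℝ u y (b i)) x (b i)) μ) :
    ∫ x, ‖fderiv ℝ u x‖ ^ 2 ∂μ
      = -∫ x, u x * ∑ i, fderiv ℝ (fun y => fderiv ℝ u y (b i)) x (b i) ∂μ := by
  let ψ : ContDiffBump (0 : E) := ⟨1, 2, one_pos, one_lt_two⟩
  set T : ℕ → E → ℝ := fun n x => u x * ∑ i, fderiv ℝ (ψ.cutoff n) x (b i) * fderiv ℝ u x (b i)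
  have hDu : Continuous (fderiv ℝ u) := hu.continuous_fderiv two_ne_zero
  have hsplit : ∀ n x, ∑ i, fderiv ℝ (fun y => ψ.cutoff n y * u y) x (b i) * fderiv ℝ u x (b i)
      = ψ.cutoff n x * ‖fderiv ℝ u x‖ ^ 2 + T n x := by
    intro n x
    rw [fderiv_fun_mul ((ψ.contDiff_cutoff (k := 1) n).differentiable one_ne_zero x)
      (hu.differentiable two_ne_zero x), ← b.sum_apply_sq]
    simp only [T, Finset.mul_sum, ← Finset.sum_add_distrib]
    refine Finset.sum_congr rfl fun i _ => ?_
    simp only [add_apply, smul_apply, smul_eq_mul]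
    ring
  obtain ⟨M, hM⟩ := ψ.exists_norm_fderiv_cutoff_le
  have hG : Integrable (fun x => ‖u x‖ * ‖fderiv ℝ u x‖) μ := hu2.norm.integrable_mul hDu2.norm
  have hTle : ∀ n x, ‖T n x‖ ≤ M * ((n : ℝ) + 1)⁻¹ * (‖u x‖ * ‖fderiv ℝ u x‖) := by
    intro n x
    rw [norm_mul, Real.norm_eq_abs (∑ i, _), mul_left_comm]
    gcongr
    exact (b.abs_sum_apply_mul_apply_le _ _).trans
      (mul_le_mul_of_nonneg_right (hM n x) (norm_nonneg _))
  have hTcont : ∀ n, Continuous (T n) := fun n =>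
    hu.continuous.mul (continuous_finsetSum _ fun i _ =>
      (((ψ.contDiff_cutoff (k := 1) n).continuous_fderiv one_ne_zero).clm_apply
        continuous_const).mul (hDu.clm_apply continuous_const))
  have hcutoff : ∀ n,
      ∫ x, ψ.cutoff n x * (u x * ∑ i, fderiv ℝ (fun y => fderiv ℝ u y (b i)) x (b i)) ∂μ
        = -((∫ x, ψ.cutoff n x * ‖fderiv ℝ u x‖ ^ 2 ∂μ) + ∫ x, T n x ∂μ) := by
    intro n
    have hibp := integral_mul_sum_fderiv_fderiv_eq_neg (μ := μ) b
      ((ψ.contDiff_cutoff n).mul (hu.of_le one_le_two)) (ψ.hasCompactSupport_cutoff n).mul_right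
      hu
    simp only [mul_assoc] at hibp
    simp only [hibp, hsplit]
    rw [integral_add]
    · exact ((ψ.continuous_cutoff n).mul (hDu.norm.pow 2)).integrable_of_hasCompactSupport
        (ψ.hasCompactSupport_cutoff n).mul_right
    · exact (hG.const_mul _).mono' (hTcont n).aestronglyMeasurable (ae_of_all _ (hTle n))
  have hT : Tendsto (fun n => ∫ x, T n x ∂μ) atTop (𝓝 0) := by
    refine tendsto_integral_of_norm_le_mul hG ?_ hTle
    simpa using (tendsto_one_div_add_atTop_nhds_zero_nat (𝕜 := ℝ)).const_mul M
  have hlim := ((ψ.tendsto_integral_cutoff_mul (hDu2.integrable_norm_pow two_ne_zero)).add hT).neg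
  simp only [← hcutoff, add_zero] at hlim
  rw [tendsto_nhds_unique (ψ.tendsto_integral_cutoff_mul hlap) hlim, neg_neg]

end Laplacian

theorem lapR_eq_sum_basisFun (f : E4 → ℝ) (x : E4) :
    lapR f x = ∑ i, fderiv ℝ (fun y => fderiv ℝ f y (EuclideanSpace.basisFun (Fin 4) ℝ i)) x
      (EuclideanSpace.basisFun (Fin 4) ℝ i) := by
  simp only [lapR, EuclideanSpace.basisFun_apply]

theorem ordered_potentials_contradiction_general
    (UQ UR : E4 → ℝ)
    (hord : ∀ x : E4, x ≠ 0 → UQ x > UR x)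
    (Q : E4 → ℝ)
    (hQsm : ContDiff ℝ 2 Q)
    (hQpos : ∀ x : E4, 0 < Q x)
    (hQL2 : MemLp Q 2 (volume : Measure E4))
    (hQH1 : MemLp (fun x => fderiv ℝ Q x) 2 (volume : Measure E4))
    (hQnorm : (∫ x : E4, (Q x) ^ 2) = 1)
    (hQeig : ∀ x : E4, -lapR Q x + UQ x * Q x = Q x)
    (hQIntU : Integrable (fun x : E4 => UQ x * (Q x) ^ 2))
    (hRIntUQ : Integrable (fun x : E4 => UR x * (Q x) ^ 2))
    (hRform : ∀ φ : E4 → ℝ, Differentiable ℝ φ →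
      MemLp φ 2 (volume : Measure E4) →
      MemLp (fun x => fderiv ℝ φ x) 2 (volume : Measure E4) →
      Integrable (fun x : E4 => UR x * (φ x) ^ 2) →
      (∫ x : E4, ‖fderiv ℝ φ x‖ ^ 2) + (∫ x : E4, UR x * (φ x) ^ 2)
        ≥ ∫ x : E4, (φ x) ^ 2) :
    False := by
  have hQlap : ∀ x, Q x * lapR Q x = UQ x * Q x ^ 2 - Q x ^ 2 := fun x => by
    linear_combination -Q x * hQeig x
  have hQlapInt : Integrable (fun x => Q x * lapR Q x) :=
    (hQIntU.sub hQL2.integrable_sq).congr (ae_of_all _ fun x => (hQlap x).symm)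
  have hkinetic : ∫ x, ‖fderiv ℝ Q x‖ ^ 2 = 1 - ∫ x, UQ x * Q x ^ 2 := by
    simp only [lapR_eq_sum_basisFun] at hQlap hQlapInt
    rw [integral_norm_fderiv_sq_eq_neg_integral_mul_laplacian (E := E4) (μ := volume)
      (EuclideanSpace.basisFun (Fin 4) ℝ) hQsm hQL2 hQH1 hQlapInt]
    simp only [hQlap, integral_sub hQIntU hQL2.integrable_sq, hQnorm]
    ring
  have hgap : 0 < ∫ x, UQ x * Q x ^ 2 - UR x * Q x ^ 2 :=
    integral_pos_of_pos_off_singleton 0 (hQIntU.sub hRIntUQ) fun x hx => by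
      rw [← sub_mul]
      exact mul_pos (sub_pos.2 (hord x hx)) (pow_pos (hQpos x) 2)
  have hform := hRform Q (hQsm.differentiable two_ne_zero) hQL2 hQH1 hRIntUQ
  rw [integral_sub hQIntU hRIntUQ] at hgap
  rw [hkinetic, hQnorm] at hform
  linarith

/-- Two Schrödinger operators `H_Q = -Δ + U_Q`, `H_R = -Δ + U_R` on `L²(ℝ⁴)` with
strictly ordered potentials cannot both possess positive normalized eigenfunctions
with eigenvalue `1` lying at the bottom of the quadratic form: a contradiction arises. -/
theorem ordered_potentials_contradiction
    (UQ UR : E4 → ℝ) (hUQc : Continuous UQ) (hURc : Continuous UR)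
    (hord : ∀ x : E4, x ≠ 0 → UQ x > UR x)
    (Q R : E4 → ℝ)
    (hQsm : ContDiff ℝ 2 Q) (hRsm : ContDiff ℝ 2 R)
    (hQpos : ∀ x : E4, 0 < Q x) (hRpos : ∀ x : E4, 0 < R x)
    (hQL2 : MemLp Q 2 (volume : Measure E4))
    (hRL2 : MemLp R 2 (volume : Measure E4))
    (hQH1 : MemLp (fun x => fderiv ℝ Q x) 2 (volume : Measure E4))
    (hRH1 : MemLp (fun x => fderiv ℝ R x) 2 (volume : Measure E4))
    (hQnorm : (∫ x : E4, (Q x) ^ 2) = 1)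
    (hRnorm : (∫ x : E4, (R x) ^ 2) = 1)
    (hQeig : ∀ x : E4, -lapR Q x + UQ x * Q x = Q x)
    (hReig : ∀ x : E4, -lapR R x + UR x * R x = R x)
    (hQIntU : Integrable (fun x : E4 => UQ x * (Q x) ^ 2))
    (hRIntUQ : Integrable (fun x : E4 => UR x * (Q x) ^ 2))
    (hQform : ∀ φ : E4 → ℝ, Differentiable ℝ φ →
      MemLp φ 2 (volume : Measure E4) →
      MemLp (fun x => fderiv ℝ φ x) 2 (volume : Measure E4) →
      Integrable (fun x : E4 => UQ x * (φ x) ^ 2) →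
      (∫ x : E4, ‖fderiv ℝ φ x‖ ^ 2) + (∫ x : E4, UQ x * (φ x) ^ 2)
        ≥ ∫ x : E4, (φ x) ^ 2)
    (hRform : ∀ φ : E4 → ℝ, Differentiable ℝ φ →
      MemLp φ 2 (volume : Measure E4) →
      MemLp (fun x => fderiv ℝ φ x) 2 (volume : Measure E4) →
      Integrable (fun x : E4 => UR x * (φ x) ^ 2) →
      (∫ x : E4, ‖fderiv ℝ φ x‖ ^ 2) + (∫ x : E4, UR x * (φ x) ^ 2)
        ≥ ∫ x : E4, (φ x) ^ 2) :
    False :=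
  ordered_potentials_contradiction_general UQ UR hord Q hQsm hQpos hQL2 hQH1 hQnorm hQeig hQIntU
    hRIntUQ hRform

end
end

section
/- Let Q^{(t)} ∈ H¹(ℝ⁴) solve Q^{(t)} = (−Δ+1)^{-1}[(φ(t^{-k}|·|^k)|·|^{-2} ∗ |Q^{(t)}|²) Q^{(t)}] with ‖Q^{(t)}‖_{L^∞} ≲ 1 and potentials V^{(t)} satisfying |V^{(t)}(x)| ≲ (1+|x|²)^{-1} uniformly in t ≥ T₀. Then there exist δ > 0, C > 0 independent of t with |Q^{(t)}(x)| ≤ C e^{−δ|x|} for all x ∈ ℝ⁴ and t ≥ T₀. -/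
open MeasureTheory

noncomputable section

/-- The modified Hartree potential
`V^{(t)}(x) = ∫ φ(t^{-k}|x-y|^k) |x-y|^{-2} |Q^{(t)}(y)|² dy`. -/
def Vt (φ : ℝ → ℝ) (k : ℝ) (Q : ℝ → E4 → ℝ) (t : ℝ) (x : E4) : ℝ :=
  ∫ y : E4, φ (t ^ (-k) * ‖x - y‖ ^ k) * (Q t y) ^ 2 / ‖x - y‖ ^ 2

/-!
Maximum principle against the barrier `C e^{-⟨x⟩/10} + ε e^{⟨x⟩/10}`, where
`⟨x⟩ = √(1 + ‖x‖²)`. Both exponentials satisfy `Δw ≤ (3/5) w`, while outside the ball of radius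
`R = √(4 |C_V|)` the potential is at most `1/4` in absolute value, so `ΔQ ≥ (3/4) Q` wherever
`Q > 0`. Hence `Q` minus the barrier has no positive maximum outside the ball; inside the ball it
is nonpositive once `C = M e^{(1+R)/10}`, and the `ε`-term sends it to `-∞` at infinity, so it is
nonpositive everywhere. Letting `ε → 0` bounds `Q`, and `-Q` in the same way, by `C e^{-⟨x⟩/10}`.
The constants depend only on `M` and `C_V`, hence not on `t`.
-/

open Filter Topology RealInnerProductSpace

section Weight

variable {E : Type*} [NormedAddCommGroup E]

def japaneseBracket (x : E) : ℝ := √(1 + ‖x‖ ^ 2)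

lemma one_le_japaneseBracket (x : E) : 1 ≤ japaneseBracket x :=
  Real.one_le_sqrt.mpr (le_add_of_nonneg_right (by positivity))

lemma japaneseBracket_pos (x : E) : 0 < japaneseBracket x :=
  one_pos.trans_le (one_le_japaneseBracket x)

lemma sq_japaneseBracket (x : E) : japaneseBracket x ^ 2 = 1 + ‖x‖ ^ 2 :=
  Real.sq_sqrt (by positivity)

lemma norm_le_japaneseBracket (x : E) : ‖x‖ ≤ japaneseBracket x :=
  Real.le_sqrt_of_sq_le (le_add_of_nonneg_left zero_le_one)

lemma japaneseBracket_le_one_add_norm (x : E) : japaneseBracket x ≤ 1 + ‖x‖ :=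
  sqrt_one_add_norm_sq_le x

def expWeight (c : ℝ) (x : E) : ℝ := Real.exp (c * japaneseBracket x)

lemma expWeight_pos (c : ℝ) (x : E) : 0 < expWeight c x := Real.exp_pos _

lemma tendsto_expWeight_cocompact [ProperSpace E] {c : ℝ} (hc : 0 < c) :
    Tendsto (expWeight (E := E) c) (cocompact E) atTop := by
  refine tendsto_atTop_mono (fun x => ?_) (tendsto_norm_cocompact_atTop.const_mul_atTop hc)
  calc c * ‖x‖ ≤ c * japaneseBracket x := by gcongr; exact norm_le_japaneseBracket x
    _ ≤ expWeight c x := (Real.add_one_le_exp _).trans' (by linarith)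

variable [InnerProductSpace ℝ E]

lemma contDiff_japaneseBracket {n : WithTop ℕ∞} : ContDiff ℝ n (japaneseBracket (E := E)) :=
  (contDiff_const.add (contDiff_norm_sq ℝ)).sqrt fun x => by positivity

lemma hasFDerivAt_japaneseBracket (x : E) :
    HasFDerivAt japaneseBracket ((japaneseBracket x)⁻¹ • innerSL ℝ x) x := by
  refine ((Real.hasDerivAt_sqrt (by positivity)).comp_hasFDerivAt x
    ((hasStrictFDerivAt_norm_sq x).hasFDerivAt.const_add 1)).congr_fderiv ?_
  ext v
  simp only [smul_apply, innerSL_apply_apply, smul_eq_mul, nsmul_eq_mul, Nat.cast_ofNat,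
    japaneseBracket]
  field_simp

lemma contDiff_expWeight {n : WithTop ℕ∞} (c : ℝ) : ContDiff ℝ n (expWeight (E := E) c) :=
  Real.contDiff_exp.comp (contDiff_const.mul contDiff_japaneseBracket)

lemma hasFDerivAt_expWeight (c : ℝ) (x : E) :
    HasFDerivAt (expWeight c)
      ((c * expWeight c x * (japaneseBracket x)⁻¹) • innerSL ℝ x) x := by
  refine ((Real.hasDerivAt_exp _).comp_hasFDerivAt x
    ((hasFDerivAt_japaneseBracket x).const_mul c)).congr_fderiv ?_
  ext v
  simp only [smul_apply, innerSL_apply_apply, smul_eq_mul, expWeight]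
  ring

lemma fderiv_expWeight_apply (c : ℝ) (y e : E) :
    fderiv ℝ (expWeight c) y e = c * expWeight c y * (japaneseBracket y)⁻¹ * ⟪y, e⟫ := by
  simp [(hasFDerivAt_expWeight c y).fderiv, mul_assoc]

lemma fderiv_fderiv_expWeight_apply (c : ℝ) (x e : E) :
    fderiv ℝ (fun y => fderiv ℝ (expWeight c) y e) x e
      = c * expWeight c x * ((c / japaneseBracket x ^ 2 - 1 / japaneseBracket x ^ 3) * ⟪x, e⟫ ^ 2
          + ‖e‖ ^ 2 / japaneseBracket x) := by
  have hs := japaneseBracket_pos x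
  have hinv : HasFDerivAt (fun y : E => (japaneseBracket y)⁻¹)
      (-(japaneseBracket x ^ 2)⁻¹ • (japaneseBracket x)⁻¹ • innerSL ℝ x) x :=
    (hasDerivAt_inv hs.ne').comp_hasFDerivAt x (hasFDerivAt_japaneseBracket x)
  have hinner : HasFDerivAt (fun y : E => ⟪y, e⟫) (innerSL ℝ e) x := by
    refine ((innerSL ℝ e).hasFDerivAt).congr_of_eventuallyEq (Eventually.of_forall fun y => ?_)
    simp [real_inner_comm]
  have h : HasFDerivAt (fun y => c * expWeight c y * (japaneseBracket y)⁻¹ * ⟪y, e⟫) _ x :=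
    (((hasFDerivAt_expWeight c x).const_mul c).mul hinv).mul hinner
  simp_rw [fderiv_expWeight_apply]
  rw [h.fderiv]
  simp only [add_apply, smul_apply, Pi.mul_apply, innerSL_apply_apply, smul_eq_mul,
    real_inner_self_eq_norm_sq]
  field_simp
  ring

end Weight

lemma IsLocalMax.deriv_deriv_nonpos {f : ℝ → ℝ} {a : ℝ} (h : IsLocalMax f a)
    (hf : ContinuousAt f a) : deriv (deriv f) a ≤ 0 := by
  by_contra! hpos
  have hconst : f =ᶠ[𝓝 a] fun _ => f a := by
    filter_upwards [h, isLocalMin_of_deriv_deriv_pos hpos h.deriv_eq_zero hf] with x hmax hmin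
    exact le_antisymm hmax hmin
  have hzero : deriv (deriv f) a = 0 := by
    rw [hconst.deriv.deriv_eq]
    simp
  exact hpos.ne' hzero

section SecondDerivative

variable {F : Type*} [NormedAddCommGroup F] [NormedSpace ℝ F] {f : F → ℝ}

lemma differentiable_fderiv_apply (hf : ContDiff ℝ 2 f) (e : F) :
    Differentiable ℝ fun y => fderiv ℝ f y e :=
  ((hf.fderiv_right le_rfl).clm_apply contDiff_const).differentiable one_ne_zero

lemma deriv_deriv_comp_add_smul (hf : ContDiff ℝ 2 f) (x e : F) :
    deriv (deriv fun s : ℝ => f (x + s • e)) 0 = fderiv ℝ (fun y => fderiv ℝ f y e) x e := by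
  have hline (s : ℝ) : HasDerivAt (fun s : ℝ => x + s • e) e s := by
    simpa using ((hasDerivAt_id s).smul_const e).const_add x
  have hderiv : deriv (fun s : ℝ => f (x + s • e)) = fun s => fderiv ℝ f (x + s • e) e :=
    funext fun s =>
      ((hf.differentiable two_ne_zero _).hasFDerivAt.comp_hasDerivAt s (hline s)).deriv
  rw [hderiv]
  exact ((differentiable_fderiv_apply hf e x).hasFDerivAt.comp_hasDerivAt_of_eq 0 (hline 0)
    (by simp)).deriv

lemma IsLocalMax.fderiv_fderiv_apply_nonpos {x : F} (h : IsLocalMax f x) (hf : ContDiff ℝ 2 f)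
    (e : F) : fderiv ℝ (fun y => fderiv ℝ f y e) x e ≤ 0 := by
  have hline : Continuous fun s : ℝ => x + s • e := by fun_prop
  rw [← deriv_deriv_comp_add_smul hf]
  refine IsLocalMax.deriv_deriv_nonpos ?_ (hf.continuous.comp hline).continuousAt
  have hmax : IsLocalMax f ((fun s : ℝ => x + s • e) 0) := by simpa using h
  exact IsLocalMax.comp_continuous (g := fun s : ℝ => x + s • e) (b := 0) hmax hline.continuousAt

end SecondDerivative

lemma lapR_add {f g : E4 → ℝ} (hf : ContDiff ℝ 2 f) (hg : ContDiff ℝ 2 g) (x : E4) :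
    lapR (f + g) x = lapR f x + lapR g x := by
  simp only [lapR, ← Finset.sum_add_distrib]
  refine Finset.sum_congr rfl fun i _ => ?_
  have hfg : (fun y => fderiv ℝ (f + g) y (EuclideanSpace.single i 1))
      = (fun y => fderiv ℝ f y (EuclideanSpace.single i 1))
        + fun y => fderiv ℝ g y (EuclideanSpace.single i 1) := by
    ext y
    rw [fderiv_add (hf.differentiable two_ne_zero y) (hg.differentiable two_ne_zero y)]
    rfl
  rw [hfg, fderiv_add (differentiable_fderiv_apply hf _ x) (differentiable_fderiv_apply hg _ x)]
  rfl

lemma lapR_smul (c : ℝ) (f : E4 → ℝ) (x : E4) : lapR (c • f) x = c * lapR f x := by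
  simp only [lapR, Finset.mul_sum]
  refine Finset.sum_congr rfl fun i _ => ?_
  have hcf : (fun y => fderiv ℝ (c • f) y (EuclideanSpace.single i 1))
      = c • fun y => fderiv ℝ f y (EuclideanSpace.single i 1) := by
    ext y
    rw [fderiv_const_smul_field]
    rfl
  rw [hcf, fderiv_const_smul_field]
  rfl

lemma IsLocalMax.lapR_nonpos {f : E4 → ℝ} {x : E4} (h : IsLocalMax f x) (hf : ContDiff ℝ 2 f) :
    lapR f x ≤ 0 :=
  Finset.sum_nonpos fun _ _ => h.fderiv_fderiv_apply_nonpos hf _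

lemma lapR_expWeight (c : ℝ) (x : E4) :
    lapR (expWeight c) x = c * expWeight c x
      * ((c / japaneseBracket x ^ 2 - 1 / japaneseBracket x ^ 3) * ‖x‖ ^ 2
          + 4 / japaneseBracket x) := by
  simp only [lapR, fderiv_fderiv_expWeight_apply, EuclideanSpace.inner_single_right,
    PiLp.norm_single, ← Finset.mul_sum, Finset.sum_add_distrib,
    EuclideanSpace.real_norm_sq_eq x]
  simp only [conj_trivial, one_mul, norm_one, one_pow, Finset.sum_const, Finset.card_univ,
    Fintype.card_fin, nsmul_eq_mul]
  ring

lemma lapR_expWeight_le {c : ℝ} (hc : |c| ≤ 1 / 10) (x : E4) :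
    lapR (expWeight c) x ≤ 3 / 5 * expWeight c x := by
  rw [lapR_expWeight]
  have hs := one_le_japaneseBracket x
  have hx : ‖x‖ ^ 2 ≤ japaneseBracket x ^ 2 := by rw [sq_japaneseBracket]; linarith
  have hratio : ‖x‖ ^ 2 / japaneseBracket x ^ 2 ≤ 1 := div_le_one_of_le₀ hx (by positivity)
  obtain ⟨hc₁, hc₂⟩ := abs_le.mp hc
  have h₁ : c ^ 2 * (‖x‖ ^ 2 / japaneseBracket x ^ 2) ≤ 1 / 100 := by
    nlinarith [sq_nonneg c]
  have h₂ : -c * (‖x‖ ^ 2 / japaneseBracket x ^ 2) / japaneseBracket x ≤ 1 / 10 := by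
    rw [div_le_iff₀ (by positivity)]
    nlinarith [div_nonneg (sq_nonneg ‖x‖) (sq_nonneg (japaneseBracket x))]
  have h₃ : 4 * c / japaneseBracket x ≤ 4 / 10 := by
    rw [div_le_iff₀ (by positivity)]
    nlinarith
  calc c * expWeight c x * ((c / japaneseBracket x ^ 2 - 1 / japaneseBracket x ^ 3) * ‖x‖ ^ 2
          + 4 / japaneseBracket x)
      = (c ^ 2 * (‖x‖ ^ 2 / japaneseBracket x ^ 2)
          + -c * (‖x‖ ^ 2 / japaneseBracket x ^ 2) / japaneseBracket x
          + 4 * c / japaneseBracket x) * expWeight c x := by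
        field_simp
        ring
    _ ≤ 3 / 5 * expWeight c x := by
        gcongr ?_ * _
        · exact (expWeight_pos c x).le
        · linarith

theorem nonpos_of_lapR_pos {v : E4 → ℝ} (hv : ContDiff ℝ 2 v)
    (hbot : Tendsto v (cocompact E4) atBot) (hlap : ∀ x, 0 < v x → 0 < lapR v x) (x : E4) :
    v x ≤ 0 := by
  obtain ⟨x₀, hx₀⟩ := hv.continuous.exists_forall_ge hbot
  refine (hx₀ x).trans (not_lt.mp fun hpos => ?_)
  exact (hlap x₀ hpos).not_ge (IsLocalMax.lapR_nonpos (Eventually.of_forall hx₀) hv)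

lemma le_add_expWeight_of_lapR_ge {u : E4 → ℝ} {B C R ε : ℝ} (hu : ContDiff ℝ 2 u)
    (hB : ∀ x, u x ≤ B) (hC : 0 ≤ C) (hε : 0 < ε)
    (hball : ∀ x, ‖x‖ ≤ R → u x ≤ C * expWeight (-(1 / 10)) x)
    (hlap : ∀ x, R < ‖x‖ → 0 < u x → 3 / 4 * u x ≤ lapR u x) (x : E4) :
    u x ≤ C * expWeight (-(1 / 10)) x + ε * expWeight (1 / 10) x := by
  set v : E4 → ℝ := u + (-C) • expWeight (-(1 / 10)) + (-ε) • expWeight (1 / 10) with hv_def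
  have hv_apply (y : E4) :
      v y = u y - C * expWeight (-(1 / 10)) y - ε * expWeight (1 / 10) y := by
    simp only [hv_def, Pi.add_apply, Pi.smul_apply, smul_eq_mul]
    ring
  have hneg : ContDiff ℝ 2 ((-C) • expWeight (E := E4) (-(1 / 10))) :=
    (contDiff_expWeight (-(1 / 10))).const_smul (-C)
  have hpos : ContDiff ℝ 2 ((-ε) • expWeight (E := E4) (1 / 10)) :=
    (contDiff_expWeight (1 / 10)).const_smul (-ε)
  have huneg : ContDiff ℝ 2 (u + (-C) • expWeight (E := E4) (-(1 / 10))) := hu.add hneg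
  have hv : ContDiff ℝ 2 v := huneg.add hpos
  have hbot : Tendsto v (cocompact E4) atBot := by
    refine tendsto_atBot_mono (fun y => ?_) (tendsto_atBot_add_const_left _ B
      ((tendsto_expWeight_cocompact (c := 1 / 10) (by norm_num)).const_mul_atTop_of_neg
        (neg_neg_of_pos hε)))
    rw [hv_apply]
    nlinarith [hB y, expWeight_pos (-(1 / 10)) y]
  have hlapv (y : E4) (hy : 0 < v y) : 0 < lapR v y := by
    rw [hv_apply] at hy
    have hwneg := expWeight_pos (-(1 / 10)) y
    have hwpos := expWeight_pos (1 / 10) y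
    have hR : R < ‖y‖ := lt_of_not_ge fun hy' => by nlinarith [hball y hy']
    have hlapu := hlap y hR (by nlinarith)
    have hlapneg := lapR_expWeight_le (c := -(1 / 10)) (by norm_num [abs_of_neg]) y
    have hlappos := lapR_expWeight_le (c := 1 / 10) (by norm_num) y
    rw [hv_def, lapR_add huneg hpos, lapR_add hu hneg, lapR_smul, lapR_smul]
    nlinarith
  have := nonpos_of_lapR_pos hv hbot hlapv x
  rw [hv_apply] at this
  linarith

theorem le_mul_expWeight_of_lapR_ge {u : E4 → ℝ} {B C R : ℝ} (hu : ContDiff ℝ 2 u)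
    (hB : ∀ x, u x ≤ B) (hC : 0 ≤ C)
    (hball : ∀ x, ‖x‖ ≤ R → u x ≤ C * expWeight (-(1 / 10)) x)
    (hlap : ∀ x, R < ‖x‖ → 0 < u x → 3 / 4 * u x ≤ lapR u x) (x : E4) :
    u x ≤ C * expWeight (-(1 / 10)) x := by
  refine le_of_forall_pos_le_add fun η hη => ?_
  have hw := expWeight_pos (1 / 10 : ℝ) x
  have := le_add_expWeight_of_lapR_ge hu hB hC (div_pos hη hw) hball hlap x
  rwa [div_mul_cancel₀ η hw.ne'] at this

theorem abs_le_mul_exp_of_neg_lapR_add_eq_mul {u V : E4 → ℝ} {M R : ℝ} (hu : ContDiff ℝ 2 u)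
    (heq : ∀ x, -lapR u x + u x = V x * u x) (hM : ∀ x, |u x| ≤ M)
    (hV : ∀ x, R < ‖x‖ → |V x| ≤ 1 / 4) (x : E4) :
    |u x| ≤ M * Real.exp ((1 + R) / 10) * Real.exp (-(1 / 10) * ‖x‖) := by
  set C := M * Real.exp ((1 + R) / 10)
  have hC : 0 ≤ C := mul_nonneg ((abs_nonneg _).trans (hM 0)) (Real.exp_pos _).le
  have hball (y : E4) (hy : ‖y‖ ≤ R) : M ≤ C * expWeight (-(1 / 10)) y := by
    have hexp : 1 ≤ Real.exp ((1 + R) / 10) * expWeight (-(1 / 10)) y := by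
      rw [expWeight, ← Real.exp_add]
      refine Real.one_le_exp ?_
      linarith [japaneseBracket_le_one_add_norm y]
    nlinarith [(abs_nonneg _).trans (hM 0)]
  have hside (σ : ℝ) (hσ : |σ| = 1) : σ * u x ≤ C * expWeight (-(1 / 10)) x := by
    have hσu (y : E4) : σ * u y ≤ M := by
      refine (le_abs_self _).trans ?_
      rw [abs_mul, hσ, one_mul]
      exact hM y
    refine le_mul_expWeight_of_lapR_ge (u := σ • u) (hu.const_smul σ) hσu hC
      (fun y hy => (hσu y).trans (hball y hy)) (fun y hy hpos => ?_) x
    have hlapu : lapR u y = (1 - V y) * u y := by linarith [heq y]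
    have hVy := (abs_le.mp (hV y hy)).2
    simp only [Pi.smul_apply, smul_eq_mul] at hpos ⊢
    rw [lapR_smul, hlapu]
    nlinarith
  have hupper : |u x| ≤ C * expWeight (-(1 / 10)) x :=
    abs_le.mpr ⟨by linarith [hside (-1) (by norm_num)], by simpa using hside 1 (by norm_num)⟩
  refine hupper.trans (mul_le_mul_of_nonneg_left (Real.exp_le_exp.mpr ?_) hC)
  linarith [norm_le_japaneseBracket x]

theorem Qt_uniform_exponential_decay_general
    (k : ℝ) (T₀ : ℝ)
    (φ : ℝ → ℝ)
    (Q : ℝ → E4 → ℝ)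
    (hsm : ∀ t : ℝ, T₀ ≤ t → ContDiff ℝ 2 (Q t))
    (heq : ∀ t : ℝ, T₀ ≤ t → ∀ x : E4,
      -lapR (Q t) x + Q t x = Vt φ k Q t x * Q t x)
    (M : ℝ)
    (hsup : ∀ t : ℝ, T₀ ≤ t → ∀ x : E4, |Q t x| ≤ M)
    (CV : ℝ)
    (hVdec : ∀ t : ℝ, T₀ ≤ t → ∀ x : E4,
      |Vt φ k Q t x| ≤ CV / (1 + ‖x‖ ^ 2)) :
    ∃ δ : ℝ, 0 < δ ∧ ∃ C : ℝ, 0 < C ∧ ∀ t : ℝ, T₀ ≤ t → ∀ x : E4,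
      |Q t x| ≤ C * Real.exp (-δ * ‖x‖) := by
  have hM : 0 ≤ M := (abs_nonneg _).trans (hsup T₀ le_rfl 0)
  set R := √(4 * |CV|)
  refine ⟨1 / 10, by norm_num, (M + 1) * Real.exp ((1 + R) / 10), by positivity,
    fun t ht x => ?_⟩
  have hV (y : E4) (hy : R < ‖y‖) : |Vt φ k Q t y| ≤ 1 / 4 := by
    have hCV : 4 * |CV| < ‖y‖ ^ 2 :=
      (Real.sqrt_lt' ((Real.sqrt_nonneg _).trans_lt hy)).mp hy
    refine (hVdec t ht y).trans ((div_le_iff₀ (by positivity)).mpr ?_)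
    linarith [le_abs_self CV]
  exact abs_le_mul_exp_of_neg_lapR_add_eq_mul (hsm t ht) (heq t ht)
    (fun y => (hsup t ht y).trans (le_add_of_nonneg_right zero_le_one)) hV x

/-- Uniform exponential decay (Slaggie–Wichmann): if the family `Q^{(t)}` solves
`-ΔQ^{(t)} + Q^{(t)} = V^{(t)} Q^{(t)}` with uniformly bounded sup-norms and
uniformly decaying potentials `|V^{(t)}(x)| ≲ (1+|x|²)⁻¹`, then
`|Q^{(t)}(x)| ≤ C e^{-δ|x|}` uniformly in `t ≥ T₀`. -/
theorem Qt_uniform_exponential_decay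
    (k : ℝ) (hk : 0 < k) (T₀ : ℝ) (hT₀ : 0 < T₀)
    (φ : ℝ → ℝ) (Cφ : ℝ) (hφ : ∀ r : ℝ, |φ r| ≤ Cφ)
    (Q : ℝ → E4 → ℝ)
    (hsm : ∀ t : ℝ, T₀ ≤ t → ContDiff ℝ 2 (Q t))
    (heq : ∀ t : ℝ, T₀ ≤ t → ∀ x : E4,
      -lapR (Q t) x + Q t x = Vt φ k Q t x * Q t x)
    (M : ℝ)
    (hsup : ∀ t : ℝ, T₀ ≤ t → ∀ x : E4, |Q t x| ≤ M)
    (hL2 : ∀ t : ℝ, T₀ ≤ t → MemLp (Q t) 2 (volume : Measure E4))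
    (CV : ℝ)
    (hVdec : ∀ t : ℝ, T₀ ≤ t → ∀ x : E4,
      |Vt φ k Q t x| ≤ CV / (1 + ‖x‖ ^ 2)) :
    ∃ δ : ℝ, 0 < δ ∧ ∃ C : ℝ, 0 < C ∧ ∀ t : ℝ, T₀ ≤ t → ∀ x : E4,
      |Q t x| ≤ C * Real.exp (-δ * ‖x‖) :=
  Qt_uniform_exponential_decay_general k T₀ φ Q hsm heq M hsup CV hVdec

end
end
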